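/- For every w ∈ ℂ and every q ∈ ℂ with |q| < 1, the series ∑_{n≥0} (−1)^n·w^{2n}·q^{n(2n+1)} / ((−q;q²)_n·(q²;q²)_n) converges absolutely and equals (1/2)·[(wq;−q)_∞ + (−wq;−q)_∞]. -/

import Mathlib

noncomputable def qPoch (a q : ℂ) (n : ℕ) : ℂ := ∏ k ∈ Finset.range n, (1 - a * q ^ k)

noncomputable def qPochInf (a q : ℂ) : ℂ := ∏' n : ℕ, (1 - a * q ^ n)

/-!
Write `F(z) = ∑ (-1)^n q^(n choose 2) z^n / (q;q)_n`. Comparing coefficients gives the functional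
equation `F(z) = (1 - z) F(qz)`, hence `F(z) = (z;q)_N F(q^N z)`; since `F` is continuous with
`F(0) = 1`, letting `N → ∞` yields Euler's identity `F(z) = (z;q)_∞`. With base `-q` and
`z = ±wq`, averaging the two series keeps only the even-index terms, and the splitting
`(-q;-q)_{2m} = (-q;q²)_m (q²;q²)_m` turns those into the terms of the series in question.
-/

open Filter Topology

theorem Nat.succ_choose_two (n : ℕ) : (n + 1).choose 2 = n.choose 2 + n := by
  rw [Nat.choose_succ_succ', Nat.choose_one_right, add_comm]

theorem Nat.two_mul_choose_two_add_self (m : ℕ) : (2 * m).choose 2 + m = 2 * (m * m) := by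
  induction m with
  | zero => rfl
  | succ m ih =>
    rw [show 2 * (m + 1) = 2 * m + 1 + 1 by ring, Nat.succ_choose_two, Nat.succ_choose_two]
    linear_combination ih

section EvenPart

variable {α : Type*} [AddCommGroup α] [UniformSpace α] [IsUniformAddGroup α] [CompleteSpace α]
  [T2Space α]

theorem tsum_add_tsum_eq_two_nsmul_tsum_even {f g : ℕ → α} (hf : Summable f) (hg : Summable g)
    (heven : ∀ k, g (2 * k) = f (2 * k)) (hodd : ∀ k, g (2 * k + 1) = -f (2 * k + 1)) :
    ∑' n, f n + ∑' n, g n = 2 • ∑' k, f (2 * k) := by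
  have hmul : Function.Injective (2 * · : ℕ → ℕ) := mul_right_injective₀ two_ne_zero
  have hsucc : Function.Injective (2 * · + 1 : ℕ → ℕ) := (add_left_injective 1).comp hmul
  rw [← tsum_even_add_odd (hf.comp_injective hmul) (hf.comp_injective hsucc),
    ← tsum_even_add_odd (hg.comp_injective hmul) (hg.comp_injective hsucc)]
  simp only [heven, hodd, tsum_neg]
  abel

end EvenPart

theorem qPoch_succ (a q : ℂ) (n : ℕ) : qPoch a q (n + 1) = qPoch a q n * (1 - a * q ^ n) :=
  Finset.prod_range_succ _ _

theorem qPoch_two_mul (a q : ℂ) (m : ℕ) :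
    qPoch a q (2 * m) = qPoch a (q ^ 2) m * qPoch (a * q) (q ^ 2) m := by
  induction m with
  | zero => simp [qPoch]
  | succ m ih =>
    rw [show 2 * (m + 1) = 2 * m + 1 + 1 by ring, qPoch_succ, qPoch_succ, qPoch_succ,
      qPoch_succ, ih, pow_succ q (2 * m), pow_mul]
    ring

theorem one_sub_mul_pow_ne_zero {a q : ℂ} (ha : ‖a‖ < 1) (hq : ‖q‖ ≤ 1) (k : ℕ) :
    1 - a * q ^ k ≠ 0 := by
  intro h
  have hlt : ‖a * q ^ k‖ < 1 := by
    rw [norm_mul, norm_pow]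
    exact mul_lt_one_of_nonneg_of_lt_one_left (norm_nonneg a) ha (pow_le_one₀ (norm_nonneg q) hq)
  rw [← sub_eq_zero.mp h, norm_one] at hlt
  exact hlt.false

theorem qPoch_ne_zero {a q : ℂ} (ha : ‖a‖ < 1) (hq : ‖q‖ ≤ 1) (n : ℕ) : qPoch a q n ≠ 0 :=
  Finset.prod_ne_zero_iff.mpr fun k _ => one_sub_mul_pow_ne_zero ha hq k

theorem multipliable_one_sub_mul_pow {q : ℂ} (hq : ‖q‖ < 1) (z : ℂ) :
    Multipliable fun n : ℕ => 1 - z * q ^ n := by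
  have hs : Summable fun n : ℕ => ‖-(z * q ^ n)‖ := by
    simpa [norm_mul, norm_pow] using (summable_geometric_of_lt_one (norm_nonneg q) hq).mul_left ‖z‖
  simpa [sub_eq_add_neg] using multipliable_one_add_of_summable hs

theorem tendsto_qPoch_qPochInf {q : ℂ} (hq : ‖q‖ < 1) (z : ℂ) :
    Tendsto (qPoch z q) atTop (𝓝 (qPochInf z q)) :=
  (multipliable_one_sub_mul_pow hq z).hasProd.tendsto_prod_nat

noncomputable def eulerTerm (q z : ℂ) (n : ℕ) : ℂ :=
  (-1) ^ n * q ^ n.choose 2 / qPoch q q n * z ^ n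

section Euler

variable {q : ℂ}

theorem eulerTerm_zero (z : ℂ) : eulerTerm q z 0 = 1 := by simp [eulerTerm, qPoch]

theorem eulerTerm_mul_left (z : ℂ) (n : ℕ) :
    eulerTerm q (q * z) n = q ^ n * eulerTerm q z n := by
  simp only [eulerTerm, mul_pow]; ring

theorem eulerTerm_neg (z : ℂ) (n : ℕ) : eulerTerm q (-z) n = (-1) ^ n * eulerTerm q z n := by
  simp only [eulerTerm, neg_pow z]; ring

theorem norm_eulerTerm_le {x y : ℂ} (h : ‖x‖ ≤ ‖y‖) (n : ℕ) :
    ‖eulerTerm q x n‖ ≤ ‖eulerTerm q y n‖ := by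
  simp only [eulerTerm, norm_mul (_ / _), norm_pow]
  gcongr

theorem eulerTerm_succ_mul (hq : ‖q‖ < 1) (z : ℂ) (n : ℕ) :
    eulerTerm q z (n + 1) * (1 - q * q ^ n) = -(z * q ^ n) * eulerTerm q z n := by
  have hP := qPoch_ne_zero hq hq.le n
  have h1 := one_sub_mul_pow_ne_zero hq hq.le n
  simp only [eulerTerm, qPoch_succ, Nat.succ_choose_two]
  field_simp
  ring

theorem summable_norm_eulerTerm (hq : ‖q‖ < 1) (z : ℂ) :
    Summable fun n => ‖eulerTerm q z n‖ := by
  have hratio (n : ℕ) :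
      eulerTerm q z (n + 1) = -(z * q ^ n) / (1 - q * q ^ n) * eulerTerm q z n := by
    rw [div_mul_eq_mul_div, eq_div_iff (one_sub_mul_pow_ne_zero hq hq.le n), eulerTerm_succ_mul hq]
  have hlim : Tendsto (fun n : ℕ => -(z * q ^ n) / (1 - q * q ^ n)) atTop (𝓝 0) := by
    have hpow := tendsto_pow_atTop_nhds_zero_of_norm_lt_one hq
    have := (hpow.const_mul z).neg.div ((hpow.const_mul q).const_sub 1) (by simp)
    rwa [mul_zero, mul_zero, neg_zero, zero_div] at this
  refine summable_of_ratio_norm_eventually_le (r := 1 / 2) (by norm_num) ?_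
  filter_upwards [hlim.norm.eventually (eventually_le_nhds (by norm_num : ‖(0 : ℂ)‖ < 1 / 2))]
    with n hn
  rw [norm_norm, norm_norm, hratio, norm_mul]
  exact mul_le_mul_of_nonneg_right hn (norm_nonneg _)

theorem summable_eulerTerm (hq : ‖q‖ < 1) (z : ℂ) : Summable (eulerTerm q z) :=
  (summable_norm_eulerTerm hq z).of_norm

theorem tsum_eulerTerm_zero : ∑' n, eulerTerm q 0 n = 1 := by
  rw [tsum_eq_single 0 fun n hn => by simp [eulerTerm, hn], eulerTerm_zero]

theorem continuous_tsum_eulerTerm (hq : ‖q‖ < 1) : Continuous fun z => ∑' n, eulerTerm q z n := by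
  refine continuous_iff_continuousAt.mpr fun z => ?_
  let R : ℂ := ↑(‖z‖ + 1)
  have hR : ‖z‖ < ‖R‖ := by
    rw [Complex.norm_real, Real.norm_of_nonneg (by positivity)]
    exact lt_add_one _
  have hcont : ContinuousOn (fun x => ∑' n, eulerTerm q x n) (Metric.ball 0 ‖R‖) :=
    continuousOn_tsum (fun n => by unfold eulerTerm; fun_prop) (summable_norm_eulerTerm hq R)
      fun n x hx => norm_eulerTerm_le (mem_ball_zero_iff.mp hx).le n
  exact hcont.continuousAt (Metric.isOpen_ball.mem_nhds (by simpa using hR))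

theorem tsum_eulerTerm_eq_one_sub_mul (hq : ‖q‖ < 1) (z : ℂ) :
    ∑' n, eulerTerm q z n = (1 - z) * ∑' n, eulerTerm q (q * z) n := by
  have hs := summable_eulerTerm hq (q * z)
  have hstep (n : ℕ) :
      eulerTerm q z (n + 1) = eulerTerm q (q * z) (n + 1) - z * eulerTerm q (q * z) n := by
    rw [eulerTerm_mul_left, eulerTerm_mul_left]
    linear_combination eulerTerm_succ_mul hq z n
  calc ∑' n, eulerTerm q z n
      = eulerTerm q z 0 + ∑' n, eulerTerm q z (n + 1) := (summable_eulerTerm hq z).tsum_eq_zero_add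
    _ = eulerTerm q (q * z) 0 +
        ∑' n, (eulerTerm q (q * z) (n + 1) - z * eulerTerm q (q * z) n) := by
      simp only [hstep, eulerTerm_zero]
    _ = (1 - z) * ∑' n, eulerTerm q (q * z) n := by
      rw [Summable.tsum_sub ((summable_nat_add_iff 1).mpr hs) (hs.mul_left z), tsum_mul_left,
        ← add_sub_assoc, ← hs.tsum_eq_zero_add]
      ring

theorem tsum_eulerTerm_eq_qPoch_mul (hq : ‖q‖ < 1) (z : ℂ) (N : ℕ) :
    ∑' n, eulerTerm q z n = qPoch z q N * ∑' n, eulerTerm q (q ^ N * z) n := by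
  induction N with
  | zero => simp [qPoch]
  | succ N ih =>
    rw [ih, tsum_eulerTerm_eq_one_sub_mul hq (q ^ N * z), qPoch_succ, ← mul_assoc q, ← pow_succ']
    ring

theorem tsum_eulerTerm (hq : ‖q‖ < 1) (z : ℂ) : ∑' n, eulerTerm q z n = qPochInf z q := by
  have htail : Tendsto (fun N : ℕ => ∑' n, eulerTerm q (q ^ N * z) n) atTop (𝓝 1) := by
    have hpow : Tendsto (fun N : ℕ => q ^ N * z) atTop (𝓝 0) := by
      simpa using (tendsto_pow_atTop_nhds_zero_of_norm_lt_one hq).mul_const z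
    simpa [Function.comp_def, tsum_eulerTerm_zero] using
      ((continuous_tsum_eulerTerm hq).tendsto 0).comp hpow
  refine tendsto_nhds_unique (f := fun N : ℕ => qPoch z q N * ∑' n, eulerTerm q (q ^ N * z) n)
    (l := atTop) (tendsto_const_nhds.congr (tsum_eulerTerm_eq_qPoch_mul hq z)) ?_
  simpa using (tendsto_qPoch_qPochInf hq z).mul htail

end Euler

theorem eulerTerm_neg_two_mul (w q : ℂ) (m : ℕ) :
    eulerTerm (-q) (w * q) (2 * m) = (-1) ^ m * w ^ (2 * m) * q ^ (m * (2 * m + 1)) /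
      (qPoch (-q) (q ^ 2) m * qPoch (q ^ 2) (q ^ 2) m) := by
  have hC := Nat.two_mul_choose_two_add_self m
  have hsign : (-1 : ℂ) ^ (2 * m).choose 2 = (-1) ^ m := by
    rw [neg_one_pow_eq_pow_mod_two, neg_one_pow_eq_pow_mod_two (n := m)]
    congr 1
    omega
  have hexp : (2 * m).choose 2 + 2 * m = m * (2 * m + 1) := by
    linear_combination hC
  rw [eulerTerm, qPoch_two_mul, neg_pow q, hsign, ← hexp, pow_add, pow_mul (-1 : ℂ), neg_one_sq,
    one_pow, mul_pow, neg_sq, neg_mul_neg, ← sq]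
  ring

theorem even_part_product_identity (w q : ℂ) (hq : ‖q‖ < 1) :
    Summable (fun n : ℕ =>
      ‖(-1 : ℂ) ^ n * w ^ (2 * n) * q ^ (n * (2 * n + 1)) /
        (qPoch (-q) (q ^ 2) n * qPoch (q ^ 2) (q ^ 2) n)‖) ∧
    (∑' n : ℕ, (-1 : ℂ) ^ n * w ^ (2 * n) * q ^ (n * (2 * n + 1)) /
        (qPoch (-q) (q ^ 2) n * qPoch (q ^ 2) (q ^ 2) n)) =
      (1 / 2 : ℂ) * (qPochInf (w * q) (-q) + qPochInf (-(w * q)) (-q)) := by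
  have hq' : ‖-q‖ < 1 := by rwa [norm_neg]
  simp only [← eulerTerm_neg_two_mul]
  refine ⟨(summable_norm_eulerTerm hq' (w * q)).comp_injective
    (mul_right_injective₀ two_ne_zero), ?_⟩
  have h := tsum_add_tsum_eq_two_nsmul_tsum_even (summable_eulerTerm hq' (w * q))
    (summable_eulerTerm hq' (-(w * q)))
    (fun k => by rw [eulerTerm_neg, pow_mul, neg_one_sq, one_pow, one_mul])
    (fun k => by rw [eulerTerm_neg, pow_succ, pow_mul, neg_one_sq, one_pow, one_mul, neg_one_mul])
  rw [tsum_eulerTerm hq', tsum_eulerTerm hq', two_nsmul] at h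
  rw [h]
  ring
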